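/- Let H be a separable infinite-dimensional complex Hilbert space and let U, V ∈ L(H) be surjective operators with infinite-dimensional kernels (i.e. each satisfies Caradus' condition (C)). On K = H ⊕ H define U₀(x,y) = (Ux, y) and V₀(x,y) = (x, Vy). Then U₀ and V₀ are commuting surjections on K, Ker(U₀) = Ker(U) × {0}, Ker(V₀) = {0} × Ker(V), the intersection Ker(U₀) ∩ Ker(V₀) = {0}, and consequently (U₀, V₀) is not a universal commuting pair, even though Ker(U₀V₀) = Ker(U₀) + Ker(V₀). -/

import Mathlib

/-!
Taking `S₁ = S₂ = 0` in the definition of a universal pair `(U₁, U₂)` forces `Uᵢ (V x) = 0`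
for the embedding `V`, so the joint kernel of a universal pair on a nonzero space contains the
nonzero range of `V`. For `U₀ = U ⊕ 1` and `V₀ = 1 ⊕ V` the two kernels lie in different
summands of `H ⊕ H`, so the joint kernel is zero.
-/

noncomputable section

/-- A commuting pair `(U₁, U₂)` is a *universal commuting pair* if for every commuting pair
`(S₁, S₂)` there are a nonzero `c ∈ ℂ`, a closed subspace `M` invariant under both `U₁` and
`U₂`, and a continuous linear isomorphism `V : H ≃ M` with `Uᵢ (V x) = c • V (Sᵢ x)` for
all `x` and `i = 1, 2`. -/
def IsUniversalPair {H : Type*} [NormedAddCommGroup H] [InnerProductSpace ℂ H]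
    (U₁ U₂ : H →L[ℂ] H) : Prop :=
  U₁.comp U₂ = U₂.comp U₁ ∧
  ∀ S₁ S₂ : H →L[ℂ] H, S₁.comp S₂ = S₂.comp S₁ →
    ∃ M : Submodule ℂ H, IsClosed (M : Set H) ∧
      (∀ x ∈ M, U₁ x ∈ M) ∧ (∀ x ∈ M, U₂ x ∈ M) ∧
      ∃ c : ℂ, c ≠ 0 ∧ ∃ V : H ≃L[ℂ] M,
        (∀ x : H, U₁ (V x : H) = c • ((V (S₁ x) : H))) ∧
        (∀ x : H, U₂ (V x : H) = c • ((V (S₂ x) : H)))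

/-- The element `(x, y)` of the Hilbert-space direct sum `H ⊕ H`. -/
def mkPair {H : Type*} [NormedAddCommGroup H] [InnerProductSpace ℂ H] (x y : H) :
    WithLp 2 (H × H) :=
  (WithLp.equiv 2 (H × H)).symm (x, y)

section PairOperators

variable {H : Type*} [NormedAddCommGroup H] [InnerProductSpace ℂ H]

theorem exists_mkPair_eq (z : WithLp 2 (H × H)) : ∃ x y : H, mkPair x y = z :=
  ⟨z.ofLp.1, z.ofLp.2, WithLp.toLp_ofLp 2 z⟩

theorem mkPair_eq_zero_iff {x y : H} : mkPair x y = 0 ↔ x = 0 ∧ y = 0 := by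
  simp [mkPair, ← WithLp.toLp_zero, Prod.ext_iff]

theorem mkPair_add_mkPair (x y x' y' : H) :
    mkPair x y + mkPair x' y' = mkPair (x + x') (y + y') := by
  simp [mkPair, ← WithLp.toLp_add]

def IsProdMap (T : WithLp 2 (H × H) →L[ℂ] WithLp 2 (H × H)) (f g : H → H) : Prop :=
  ∀ x y : H, T (mkPair x y) = mkPair (f x) (g y)

namespace IsProdMap

variable {T T' : WithLp 2 (H × H) →L[ℂ] WithLp 2 (H × H)} {f g f' g' : H → H}

theorem comp (h : IsProdMap T f g) (h' : IsProdMap T' f' g') :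
    IsProdMap (T.comp T') (f ∘ f') (g ∘ g') := fun x y =>
  (congrArg T (h' x y)).trans (h _ _)

theorem unique (h : IsProdMap T f g) (h' : IsProdMap T' f g) : T = T' := by
  ext z
  obtain ⟨x, y, rfl⟩ := exists_mkPair_eq z
  rw [h, h']

theorem surjective (h : IsProdMap T f g) (hf : Function.Surjective f)
    (hg : Function.Surjective g) : Function.Surjective T := by
  intro z
  obtain ⟨x', y', rfl⟩ := exists_mkPair_eq z
  obtain ⟨x, rfl⟩ := hf x'
  obtain ⟨y, rfl⟩ := hg y'
  exact ⟨mkPair x y, h x y⟩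

theorem mkPair_mem_ker_iff (h : IsProdMap T f g) (x y : H) :
    mkPair x y ∈ LinearMap.ker (T : WithLp 2 (H × H) →ₗ[ℂ] WithLp 2 (H × H)) ↔
      f x = 0 ∧ g y = 0 := by
  rw [LinearMap.mem_ker, ContinuousLinearMap.coe_coe, h, mkPair_eq_zero_iff]

theorem ker_inf_ker_eq_bot (h : IsProdMap T f g) (h' : IsProdMap T' f' g')
    (hf : ∀ x, f x = 0 → f' x = 0 → x = 0) (hg : ∀ y, g y = 0 → g' y = 0 → y = 0) :
    LinearMap.ker (T : WithLp 2 (H × H) →ₗ[ℂ] WithLp 2 (H × H)) ⊓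
      LinearMap.ker (T' : WithLp 2 (H × H) →ₗ[ℂ] WithLp 2 (H × H)) = ⊥ := by
  refine eq_bot_iff.2 fun z hz => ?_
  obtain ⟨x, y, rfl⟩ := exists_mkPair_eq z
  obtain ⟨hfx, hgy⟩ := (h.mkPair_mem_ker_iff x y).1 hz.1
  obtain ⟨hf'x, hg'y⟩ := (h'.mkPair_mem_ker_iff x y).1 hz.2
  rw [Submodule.mem_bot, mkPair_eq_zero_iff]
  exact ⟨hf x hfx hf'x, hg y hgy hg'y⟩

theorem ker_comp_le_sup (h : IsProdMap T f id) (h' : IsProdMap T' id g) :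
    LinearMap.ker (T.comp T' : WithLp 2 (H × H) →ₗ[ℂ] WithLp 2 (H × H)) ≤
      LinearMap.ker (T : WithLp 2 (H × H) →ₗ[ℂ] WithLp 2 (H × H)) ⊔
      LinearMap.ker (T' : WithLp 2 (H × H) →ₗ[ℂ] WithLp 2 (H × H)) := by
  intro z hz
  obtain ⟨x, y, rfl⟩ := exists_mkPair_eq z
  obtain ⟨hx, hy⟩ := ((h.comp h').mkPair_mem_ker_iff x y).1 hz
  rw [← add_zero x, ← zero_add y, ← mkPair_add_mkPair]
  exact Submodule.add_mem_sup ((h.mkPair_mem_ker_iff x 0).2 ⟨hx, rfl⟩)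
    ((h'.mkPair_mem_ker_iff 0 y).2 ⟨rfl, hy⟩)

end IsProdMap

end PairOperators

theorem LinearMap.sup_ker_le_ker_comp_of_commute {R M : Type*} [Semiring R] [AddCommMonoid M]
    [Module R M] {f g : M →ₗ[R] M} (hfg : f ∘ₗ g = g ∘ₗ f) :
    LinearMap.ker f ⊔ LinearMap.ker g ≤ LinearMap.ker (f ∘ₗ g) :=
  sup_le (hfg ▸ LinearMap.ker_le_ker_comp f g) (LinearMap.ker_le_ker_comp g f)

theorem IsUniversalPair.ker_inf_ker_ne_bot {H : Type*} [NormedAddCommGroup H]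
    [InnerProductSpace ℂ H] [Nontrivial H] {U₁ U₂ : H →L[ℂ] H} (h : IsUniversalPair U₁ U₂) :
    LinearMap.ker (U₁ : H →ₗ[ℂ] H) ⊓ LinearMap.ker (U₂ : H →ₗ[ℂ] H) ≠ ⊥ := by
  obtain ⟨M, -, -, -, c, -, W, hW₁, hW₂⟩ := h.2 0 0 rfl
  obtain ⟨x, hx⟩ := exists_ne (0 : H)
  refine (Submodule.ne_bot_iff _).2 ⟨W x, ⟨?_, ?_⟩, by simpa using hx⟩
  · simpa using hW₁ x
  · simpa using hW₂ x

theorem diagonal_pair_not_universal_general {H : Type*} [NormedAddCommGroup H]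
    [InnerProductSpace ℂ H]
    (hinf : ¬ FiniteDimensional ℂ H)
    (U V : H →L[ℂ] H)
    (hUsurj : Function.Surjective U)
    (hVsurj : Function.Surjective V)
    (U₀ V₀ : WithLp 2 (H × H) →L[ℂ] WithLp 2 (H × H))
    (hU₀ : ∀ x y : H, U₀ (mkPair x y) = mkPair (U x) y)
    (hV₀ : ∀ x y : H, V₀ (mkPair x y) = mkPair x (V y)) :
    U₀.comp V₀ = V₀.comp U₀ ∧
    Function.Surjective U₀ ∧ Function.Surjective V₀ ∧
    (∀ x y : H, mkPair x y ∈ LinearMap.ker (U₀ : WithLp 2 (H × H) →ₗ[ℂ] WithLp 2 (H × H)) ↔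
      x ∈ LinearMap.ker (U : H →ₗ[ℂ] H) ∧ y = 0) ∧
    (∀ x y : H, mkPair x y ∈ LinearMap.ker (V₀ : WithLp 2 (H × H) →ₗ[ℂ] WithLp 2 (H × H)) ↔
      x = 0 ∧ y ∈ LinearMap.ker (V : H →ₗ[ℂ] H)) ∧
    LinearMap.ker (U₀ : WithLp 2 (H × H) →ₗ[ℂ] WithLp 2 (H × H)) ⊓
      LinearMap.ker (V₀ : WithLp 2 (H × H) →ₗ[ℂ] WithLp 2 (H × H)) = ⊥ ∧
    ¬ IsUniversalPair U₀ V₀ ∧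
    LinearMap.ker (U₀.comp V₀ : WithLp 2 (H × H) →ₗ[ℂ] WithLp 2 (H × H)) =
      LinearMap.ker (U₀ : WithLp 2 (H × H) →ₗ[ℂ] WithLp 2 (H × H)) ⊔
      LinearMap.ker (V₀ : WithLp 2 (H × H) →ₗ[ℂ] WithLp 2 (H × H)) := by
  have hU₀' : IsProdMap U₀ U id := hU₀
  have hV₀' : IsProdMap V₀ id V := hV₀
  have hcomm : U₀.comp V₀ = V₀.comp U₀ := (hU₀'.comp hV₀').unique (hV₀'.comp hU₀')
  have hker : LinearMap.ker (U₀ : WithLp 2 (H × H) →ₗ[ℂ] WithLp 2 (H × H)) ⊓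
      LinearMap.ker (V₀ : WithLp 2 (H × H) →ₗ[ℂ] WithLp 2 (H × H)) = ⊥ :=
    hU₀'.ker_inf_ker_eq_bot hV₀' (fun _ _ hx => hx) (fun _ hy _ => hy)
  have : Nontrivial H := not_subsingleton_iff_nontrivial.1 fun _ => hinf inferInstance
  refine ⟨hcomm, hU₀'.surjective hUsurj Function.surjective_id,
    hV₀'.surjective Function.surjective_id hVsurj, hU₀'.mkPair_mem_ker_iff,
    hV₀'.mkPair_mem_ker_iff, hker, fun huniv => huniv.ker_inf_ker_ne_bot hker,
    le_antisymm (hU₀'.ker_comp_le_sup hV₀')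
      (LinearMap.sup_ker_le_ker_comp_of_commute (congrArg ContinuousLinearMap.toLinearMap hcomm))⟩

/-- Let `U, V` be surjections with infinite-dimensional kernels on `H`, and on `K = H ⊕ H`
let `U₀ (x,y) = (U x, y)` and `V₀ (x,y) = (x, V y)`. Then `U₀, V₀` are commuting surjections
with `Ker U₀ = Ker U × {0}`, `Ker V₀ = {0} × Ker V`, `Ker U₀ ∩ Ker V₀ = {0}`, so `(U₀, V₀)`
is not a universal commuting pair, even though `Ker (U₀ V₀) = Ker U₀ + Ker V₀`. -/
theorem diagonal_pair_not_universal {H : Type*} [NormedAddCommGroup H]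
    [InnerProductSpace ℂ H] [CompleteSpace H] [TopologicalSpace.SeparableSpace H]
    (hinf : ¬ FiniteDimensional ℂ H)
    (U V : H →L[ℂ] H)
    (hUsurj : Function.Surjective U) (hUker : ¬ FiniteDimensional ℂ (LinearMap.ker (U : H →ₗ[ℂ] H)))
    (hVsurj : Function.Surjective V) (hVker : ¬ FiniteDimensional ℂ (LinearMap.ker (V : H →ₗ[ℂ] H)))
    (U₀ V₀ : WithLp 2 (H × H) →L[ℂ] WithLp 2 (H × H))
    (hU₀ : ∀ x y : H, U₀ (mkPair x y) = mkPair (U x) y)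
    (hV₀ : ∀ x y : H, V₀ (mkPair x y) = mkPair x (V y)) :
    U₀.comp V₀ = V₀.comp U₀ ∧
    Function.Surjective U₀ ∧ Function.Surjective V₀ ∧
    (∀ x y : H, mkPair x y ∈ LinearMap.ker (U₀ : WithLp 2 (H × H) →ₗ[ℂ] WithLp 2 (H × H)) ↔
      x ∈ LinearMap.ker (U : H →ₗ[ℂ] H) ∧ y = 0) ∧
    (∀ x y : H, mkPair x y ∈ LinearMap.ker (V₀ : WithLp 2 (H × H) →ₗ[ℂ] WithLp 2 (H × H)) ↔
      x = 0 ∧ y ∈ LinearMap.ker (V : H →ₗ[ℂ] H)) ∧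
    LinearMap.ker (U₀ : WithLp 2 (H × H) →ₗ[ℂ] WithLp 2 (H × H)) ⊓
      LinearMap.ker (V₀ : WithLp 2 (H × H) →ₗ[ℂ] WithLp 2 (H × H)) = ⊥ ∧
    ¬ IsUniversalPair U₀ V₀ ∧
    LinearMap.ker (U₀.comp V₀ : WithLp 2 (H × H) →ₗ[ℂ] WithLp 2 (H × H)) =
      LinearMap.ker (U₀ : WithLp 2 (H × H) →ₗ[ℂ] WithLp 2 (H × H)) ⊔
      LinearMap.ker (V₀ : WithLp 2 (H × H) →ₗ[ℂ] WithLp 2 (H × H)) :=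
  diagonal_pair_not_universal_general hinf U V hUsurj hVsurj U₀ V₀ hU₀ hV₀

end
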